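/- Let Γ(ρ) > 0 be the unique positive solution of Γ = 1/(ρ + βω_c/(1+ω_cΓ) + βω_d/(1+ω_dΓ)) for ρ > 0, β, ω_d, ω_c > 0. Then Γ is differentiable and −dΓ/dρ = Γ/(ρ + βω_c/(1+ω_cΓ)² + βω_d/(1+ω_dΓ)²) > 0; in particular Γ is strictly decreasing in ρ. -/

import Mathlib

/-!
With `H g = β ωc g / (1 + ωc g) + β ωd g / (1 + ωd g)`, increasing in `g > 0`, the fixed-point
equation reads `ρ Γ(ρ) + H (Γ(ρ)) = 1`. Hence `Γ` is strictly decreasing while `ρ ↦ ρ Γ(ρ)` is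
nondecreasing, and the two together make `Γ` locally Lipschitz. So `Γ` is a continuous local
inverse of `R g = 1 / g - β ωc / (1 + ωc g) - β ωd / (1 + ωd g)`, and the one-variable inverse
function theorem gives `Γ' = 1 / R'(Γ)`, where
`g R'(g) = -(R g + β ωc / (1 + ωc g)² + β ωd / (1 + ωd g)²)`.
-/

open Set

theorem monotoneOn_mul_div_one_add_mul {c ω : ℝ} (hc : 0 ≤ c) (hω : 0 ≤ ω) :
    MonotoneOn (fun t => c * t / (1 + ω * t)) (Ioi 0) := by
  intro x hx y hy hxy
  have hx' : 0 < 1 + ω * x := by have := mem_Ioi.1 hx; positivity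
  have hy' : 0 < 1 + ω * y := by have := mem_Ioi.1 hy; positivity
  dsimp only
  rw [div_le_div_iff₀ hx' hy']
  nlinarith [mul_nonneg hc (sub_nonneg.2 hxy)]

theorem hasDerivAt_div_one_add_mul (a ω g : ℝ) (hg : 1 + ω * g ≠ 0) :
    HasDerivAt (fun t => a / (1 + ω * t)) (-(a * ω) / (1 + ω * g) ^ 2) g := by
  have h : HasDerivAt (fun t => 1 + ω * t) ω g := by
    simpa using ((hasDerivAt_id g).const_mul ω).const_add 1
  exact ((hasDerivAt_const g a).div h hg).congr_deriv (by ring)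

section FixedPoint

variable {H Γ : ℝ → ℝ} (hH : MonotoneOn H (Ioi 0))
  (hΓ : ∀ ρ, 0 < ρ → 0 < Γ ρ ∧ ρ * Γ ρ + H (Γ ρ) = 1)
include hH hΓ

theorem strictAntiOn_of_mul_add_eq_one : StrictAntiOn Γ (Ioi 0) := by
  intro ρ hρ ρ' hρ' hlt
  obtain ⟨hΓρ, hρeq⟩ := hΓ ρ hρ
  obtain ⟨hΓρ', hρ'eq⟩ := hΓ ρ' hρ'
  by_contra! hle
  have := hH hΓρ hΓρ' hle
  nlinarith [mul_lt_mul_of_pos_right hlt hΓρ', mul_le_mul_of_nonneg_left hle hρ.le]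

theorem monotoneOn_mul_of_mul_add_eq_one : MonotoneOn (fun ρ => ρ * Γ ρ) (Ioi 0) := by
  intro ρ hρ ρ' hρ' hle
  have hΓle : Γ ρ' ≤ Γ ρ := (strictAntiOn_of_mul_add_eq_one hH hΓ).antitoneOn hρ hρ' hle
  have := hH (hΓ ρ' hρ').1 (hΓ ρ hρ).1 hΓle
  linarith [(hΓ ρ hρ).2, (hΓ ρ' hρ').2]

theorem lipschitzOnWith_of_mul_add_eq_one {a : ℝ} (ha : 0 < a) :
    LipschitzOnWith (Real.toNNReal (Γ a / a)) Γ (Ici a) := by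
  have hanti := (strictAntiOn_of_mul_add_eq_one hH hΓ).antitoneOn
  refine LipschitzOnWith.of_le_add_mul' _ fun ρ hρ ρ' hρ' => ?_
  have hρ : 0 < ρ := ha.trans_le hρ
  have hρ' : 0 < ρ' := ha.trans_le hρ'
  rcases le_total ρ' ρ with hle | hle
  · have := hanti hρ' hρ hle
    have : 0 ≤ Γ a / a * dist ρ ρ' := mul_nonneg (div_nonneg (hΓ a ha).1.le ha.le) dist_nonneg
    linarith
  · -- `ρ Γ ρ ≤ ρ' Γ ρ'` gives `ρ (Γ ρ - Γ ρ') ≤ (ρ' - ρ) Γ ρ' ≤ (ρ' - ρ) Γ a`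
    have hmul := monotoneOn_mul_of_mul_add_eq_one hH hΓ hρ hρ' hle
    have hΓ' : Γ ρ' ≤ Γ a := hanti ha hρ' ‹a ≤ ρ'›
    have hΓρ : Γ ρ' ≤ Γ ρ := hanti hρ hρ' hle
    rw [Real.dist_eq, abs_of_nonpos (by linarith), div_mul_eq_mul_div, ← sub_le_iff_le_add',
      le_div_iff₀ ha]
    nlinarith [mul_nonneg (sub_nonneg.2 hΓρ) (sub_nonneg.2 ‹a ≤ ρ›),
      mul_nonneg (sub_nonneg.2 hle) (sub_nonneg.2 hΓ')]

theorem continuousOn_of_mul_add_eq_one : ContinuousOn Γ (Ioi 0) := by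
  intro ρ hρ
  exact ((lipschitzOnWith_of_mul_add_eq_one hH hΓ (half_pos hρ)).continuousOn.continuousAt
    (Ici_mem_nhds (half_lt_self hρ))).continuousWithinAt

end FixedPoint

noncomputable def cbfInverse (β ωc ωd g : ℝ) : ℝ :=
  1 / g - β * ωc / (1 + ωc * g) - β * ωd / (1 + ωd * g)

theorem cbfInverse_eq_of_eq_one_div {β ωc ωd g ρ : ℝ}
    (h : g = 1 / (ρ + β * ωc / (1 + ωc * g) + β * ωd / (1 + ωd * g))) :
    cbfInverse β ωc ωd g = ρ := by
  have : 1 / g = ρ + β * ωc / (1 + ωc * g) + β * ωd / (1 + ωd * g) := by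
    nth_rw 1 [h]; rw [one_div_one_div]
  rw [cbfInverse, this]; ring

theorem mul_add_eq_one_of_cbfInverse_eq {β ωc ωd g ρ : ℝ} (hg : g ≠ 0)
    (h : cbfInverse β ωc ωd g = ρ) :
    ρ * g + (β * ωc * g / (1 + ωc * g) + β * ωd * g / (1 + ωd * g)) = 1 := by
  rw [← h, cbfInverse]
  field_simp
  ring

theorem hasDerivAt_cbfInverse {β ωc ωd g : ℝ} (hg : g ≠ 0) (hc : 1 + ωc * g ≠ 0)
    (hd : 1 + ωd * g ≠ 0) :
    HasDerivAt (cbfInverse β ωc ωd)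
      (-(cbfInverse β ωc ωd g + β * ωc / (1 + ωc * g) ^ 2 + β * ωd / (1 + ωd * g) ^ 2) / g) g := by
  have h := (((hasDerivAt_const g (1 : ℝ)).div (hasDerivAt_id' g) hg).sub
    (hasDerivAt_div_one_add_mul (β * ωc) ωc g hc)).sub
    (hasDerivAt_div_one_add_mul (β * ωd) ωd g hd)
  refine h.congr_deriv ?_
  -- `field_simp` looks for nonvanishing in its normal form `1 + g * ω`
  have hc' : 1 + g * ωc ≠ 0 := by rwa [mul_comm]
  have hd' : 1 + g * ωd ≠ 0 := by rwa [mul_comm]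
  rw [cbfInverse]
  field_simp
  ring

theorem cbf_gamma_derivative (β ωd ωc : ℝ) (hβ : 0 < β) (hωd : 0 < ωd) (hωc : 0 < ωc)
    (Γ : ℝ → ℝ)
    (hΓ : ∀ ρ : ℝ, 0 < ρ → 0 < Γ ρ ∧
      Γ ρ = 1 / (ρ + β * ωc / (1 + ωc * Γ ρ) + β * ωd / (1 + ωd * Γ ρ))) :
    (∀ ρ : ℝ, 0 < ρ → DifferentiableAt ℝ Γ ρ ∧
      -deriv Γ ρ =
        Γ ρ / (ρ + β * ωc / (1 + ωc * Γ ρ) ^ 2 + β * ωd / (1 + ωd * Γ ρ) ^ 2) ∧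
      0 < -deriv Γ ρ) ∧
    StrictAntiOn Γ (Set.Ioi 0) := by
  have hinv : ∀ ρ, 0 < ρ → cbfInverse β ωc ωd (Γ ρ) = ρ :=
    fun ρ hρ => cbfInverse_eq_of_eq_one_div (hΓ ρ hρ).2
  have hmono : MonotoneOn (fun g => β * ωc * g / (1 + ωc * g) + β * ωd * g / (1 + ωd * g))
      (Ioi 0) :=
    (monotoneOn_mul_div_one_add_mul (by positivity) hωc.le).add
      (monotoneOn_mul_div_one_add_mul (by positivity) hωd.le)
  have hfix : ∀ ρ, 0 < ρ → 0 < Γ ρ ∧ ρ * Γ ρ + (β * ωc * Γ ρ / (1 + ωc * Γ ρ)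
      + β * ωd * Γ ρ / (1 + ωd * Γ ρ)) = 1 :=
    fun ρ hρ => ⟨(hΓ ρ hρ).1, mul_add_eq_one_of_cbfInverse_eq (hΓ ρ hρ).1.ne' (hinv ρ hρ)⟩
  refine ⟨fun ρ hρ => ?_, strictAntiOn_of_mul_add_eq_one hmono hfix⟩
  have hg := (hΓ ρ hρ).1
  have hR := hasDerivAt_cbfInverse (β := β) hg.ne' (by positivity : 1 + ωc * Γ ρ ≠ 0)
    (by positivity : 1 + ωd * Γ ρ ≠ 0)
  rw [hinv ρ hρ] at hR
  have hΓ' := hR.of_local_left_inverse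
    ((continuousOn_of_mul_add_eq_one hmono hfix).continuousAt (Ioi_mem_nhds hρ))
    (div_ne_zero (neg_ne_zero.2 (by positivity)) hg.ne') ((eventually_gt_nhds hρ).mono hinv)
  have hderiv : -deriv Γ ρ =
      Γ ρ / (ρ + β * ωc / (1 + ωc * Γ ρ) ^ 2 + β * ωd / (1 + ωd * Γ ρ) ^ 2) := by
    rw [hΓ'.deriv]
    field_simp
  exact ⟨hΓ'.differentiableAt, hderiv, hderiv ▸ by positivity⟩
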